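/- For every t ∈ ℝ with 0 < t ≤ 3/2, one has (3/2 − t)² > (3/4)·(3 − 4t), and 3/2 − t is the minimum of {|s| : s ∈ Spec(t)}. (On the round 3-sphere, with scalar curvature S = 6 and |dη| = 2, the right-hand side (3/4)(3 − 4t) equals the magnetic Friedrich lower bound n/(4(n−1))·inf(S − 4t⌊n/2⌋^{1/2}|dη|) for n = 3; hence the magnetic Friedrich inequality (λ₁^{tη})² ≥ (3/4)(3 − 4t) is strict on the round 3-sphere for every t ∈ (0, 3/2].) -/

import Mathlib

/-!
Every eigenvalue coming from `f₀` has modulus at least `3/2`, because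
`f₀(k,p,t) ≥ 4(k − p)(p + 1) ≥ 4` for `0 ≤ p < k`; the remaining eigenvalues `3/2 + k ± t`
have modulus at least `3/2 − t`, attained at `k = 0`. The strict inequality is the identity
`(3/2 − t)² − (3/4)(3 − 4t) = t²`.
-/

/-- `f₀(k,p,t) = (1 + t + 2p − k)² + 4(k − p)(p + 1)`. -/
noncomputable def f0 (k p : ℤ) (t : ℝ) : ℝ :=
  (1 + t + 2 * (p : ℝ) - (k : ℝ)) ^ 2 + 4 * ((k : ℝ) - (p : ℝ)) * ((p : ℝ) + 1)

/-- The spectrum of the magnetic Dirac operator `D^{tη}` on the round 3-sphere of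
sectional curvature 1, where `η` is the Reeb one-form of the Hopf fibration. -/
noncomputable def Spec (t : ℝ) : Set ℝ :=
  {s | ∃ k : ℕ, s = 3 / 2 + (k : ℝ) + t} ∪
    {s | ∃ k : ℕ, s = 3 / 2 + (k : ℝ) - t} ∪
    {s | ∃ k p : ℕ, p < k ∧ s = 1 / 2 + Real.sqrt (f0 (k : ℤ) (p : ℤ) t)} ∪
    {s | ∃ k p : ℕ, p < k ∧ s = 1 / 2 - Real.sqrt (f0 (k : ℤ) (p : ℤ) t)}

lemma four_le_f0 {k p : ℤ} (hp : 0 ≤ p) (hpk : p < k) (t : ℝ) : 4 ≤ f0 k p t := by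
  have hp' : (0 : ℝ) ≤ p := by exact_mod_cast hp
  have hpk' : (p : ℝ) + 1 ≤ k := by exact_mod_cast hpk
  have hprod : 1 ≤ ((k : ℝ) - p) * ((p : ℝ) + 1) := by nlinarith
  unfold f0
  nlinarith [sq_nonneg (1 + t + 2 * (p : ℝ) - k)]

lemma two_le_sqrt_f0 {k p : ℤ} (hp : 0 ≤ p) (hpk : p < k) (t : ℝ) :
    2 ≤ Real.sqrt (f0 k p t) :=
  Real.le_sqrt_of_sq_le (by linarith [four_le_f0 hp hpk t])

lemma three_halves_sub_le_abs_of_mem_Spec {t s : ℝ} (ht : 0 ≤ t) (hs : s ∈ Spec t) :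
    3 / 2 - t ≤ |s| := by
  rcases hs with ((⟨k, rfl⟩ | ⟨k, rfl⟩) | ⟨k, p, hpk, rfl⟩) | ⟨k, p, hpk, rfl⟩
  · have hk : (0 : ℝ) ≤ k := k.cast_nonneg
    linarith [le_abs_self (3 / 2 + (k : ℝ) + t)]
  · have hk : (0 : ℝ) ≤ k := k.cast_nonneg
    linarith [le_abs_self (3 / 2 + (k : ℝ) - t)]
  · have h2 := two_le_sqrt_f0 (Int.natCast_nonneg p) (Int.ofNat_lt.mpr hpk) t
    linarith [le_abs_self (1 / 2 + Real.sqrt (f0 k p t))]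
  · have h2 := two_le_sqrt_f0 (Int.natCast_nonneg p) (Int.ofNat_lt.mpr hpk) t
    linarith [neg_abs_le (1 / 2 - Real.sqrt (f0 k p t))]

lemma three_halves_sub_mem_Spec (t : ℝ) : 3 / 2 - t ∈ Spec t :=
  Or.inl (Or.inl (Or.inr ⟨0, by simp⟩))

/-- For `0 < t ≤ 3/2`, one has `(3/2 − t)² > (3/4)(3 − 4t)`, and `3/2 − t` is the
minimum of `{|s| : s ∈ Spec t}`: the magnetic Friedrich inequality is strict on `𝕊³`. -/
theorem stmt14 (t : ℝ) (ht0 : 0 < t) (ht : t ≤ 3 / 2) :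
    (3 / 2 - t) ^ 2 > 3 / 4 * (3 - 4 * t) ∧
    IsLeast {r : ℝ | ∃ s ∈ Spec t, |s| = r} (3 / 2 - t) := by
  have hgap : (3 / 2 - t) ^ 2 - 3 / 4 * (3 - 4 * t) = t ^ 2 := by ring
  refine ⟨by nlinarith [pow_pos ht0 2], ?_, ?_⟩
  · exact ⟨3 / 2 - t, three_halves_sub_mem_Spec t, abs_of_nonneg (by linarith)⟩
  · rintro r ⟨s, hs, rfl⟩
    exact three_halves_sub_le_abs_of_mem_Spec ht0.le hs
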